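/- arXiv:1102.2629 — 3 statements merged into one kernel-verified Lean document; each statement's English description precedes it below -/
import Mathlib

section
/- Every nilpotent restricted derivation of a three-dimensional restricted Heisenberg algebra over a field of characteristic two is inner. More precisely, let F be a field of characteristic 2, let L = h_1(F) = Fx + Fy + Fz with [x,y] = z central, equipped with any p-mapping making L a restricted Lie algebra; then every restricted derivation D of L satisfying D^n = 0 for some positive integer n is of the form ad_L(a) for some a ∈ L. -/
open UniversalEnvelopingAlgebra

/-- A restricted Lie algebra structure (`p`-mapping) on a Lie algebra `L` over `F`.
The requirement that the `p`-mapping satisfies Jacobson's formula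
`(x+y)^{[p]} = x^{[p]} + y^{[p]} + ∑ᵢ sᵢ(x,y)` is encoded inside the universal enveloping
algebra, where `∑ᵢ sᵢ(x,y) = (ι x + ι y)^p - (ι x)^p - (ι y)^p`. -/
structure PMapping (p : ℕ) (F L : Type*) [CommRing F] [LieRing L] [LieAlgebra F L] where
  pow : L → L
  ad_pow : ∀ x : L, LieAlgebra.ad F L (pow x) = LieAlgebra.ad F L x ^ p
  smul_pow : ∀ (a : F) (x : L), pow (a • x) = a ^ p • pow x
  jacobson : ∀ x y : L,
    ι F (pow (x + y)) =
      ι F (pow x) + ι F (pow y) +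
        ((ι F x + ι F y) ^ p - (ι F x : UniversalEnvelopingAlgebra F L) ^ p - ι F y ^ p)

namespace PMapping

variable {p : ℕ} {F L : Type*} [CommRing F] [LieRing L] [LieAlgebra F L]

/-- A derivation `D` of `(L, [p])` is restricted if `D(x^{[p]}) = (ad x)^{p-1}(D x)`. -/
def IsRestrictedDer (P : PMapping p F L) (D : LieDerivation F L L) : Prop :=
  ∀ x : L, D (P.pow x) = ((LieAlgebra.ad F L x) ^ (p - 1)) (D x)

/-- A derivation is inner if it is of the form `ad_L(a)` for some `a ∈ L`. -/
def IsInnerDer (D : LieDerivation F L L) : Prop :=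
  ∃ a : L, ∀ x : L, D x = ⁅a, x⁆

/-- Membership in the `p`-subalgebra generated by a set `s`: `x` lies in every Lie
subalgebra that contains `s` and is closed under the `p`-mapping. -/
def MemPSpan (P : PMapping p F L) (s : Set L) (x : L) : Prop :=
  ∀ K : LieSubalgebra F L, s ⊆ ↑K → (∀ y ∈ K, P.pow y ∈ K) → x ∈ K

/-- An element `x` is semisimple if it lies in the `p`-subalgebra generated by `x^{[p]}`. -/
def IsSemisimpleElt (P : PMapping p F L) (x : L) : Prop :=
  P.MemPSpan {P.pow x} x

/-- A restricted Lie algebra is a torus if all of its elements are semisimple. -/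
def IsTorus (P : PMapping p F L) : Prop :=
  ∀ x : L, P.IsSemisimpleElt x

/-- A `p`-ideal is a Lie ideal closed under the `p`-mapping. -/
def IsPIdeal (P : PMapping p F L) (I : LieIdeal F L) : Prop :=
  ∀ x ∈ I, P.pow x ∈ I

end PMapping

/-- `L` is isomorphic, as an ordinary Lie algebra, to the three-dimensional Heisenberg
algebra `h₁(F)`: it has a basis `x, y, z` with `⁅x,y⁆ = z` and `z` central. -/
def IsHeisenberg3 (F L : Type*) [CommRing F] [LieRing L] [LieAlgebra F L] : Prop :=
  ∃ b : Module.Basis (Fin 3) F L, ⁅b 0, b 1⁆ = b 2 ∧ ⁅b 0, b 2⁆ = 0 ∧ ⁅b 1, b 2⁆ = 0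

/-! The centre of `h₁(F)` is `F z` and a derivation preserves the centre, so `D z = μ z`;
since `D` is nilpotent, `μ = 0`. Every `v^{[2]}` is central because `(ad v)^2 = 0`, so `D`
kills it and restrictedness reduces to `⁅v, D v⁆ = 0`. Hence `D x ≡ a x` and `D y ≡ d y`
modulo `F z ⊆ ker D`, nilpotency again gives `a = d = 0`, and `D x = e z`, `D y = f z`
make `D = ad (f x - e y)`. -/

theorem Module.End.eq_zero_of_isNilpotent_of_apply_sub_smul_mem {K V : Type*} [Field K]
    [AddCommGroup V] [Module K V] {f : Module.End K V} (hf : IsNilpotent f)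
    {W : Submodule K V} (hW : W ≤ LinearMap.ker f) {v : V} (hv : v ∉ W) {μ : K}
    (h : f v - μ • v ∈ W) : μ = 0 := by
  have hpow : ∀ k : ℕ, (f ^ k) v - μ ^ k • v ∈ W := by
    intro k
    induction k with
    | zero => simp
    | succ k ih =>
      have hsplit : (f ^ (k + 1)) v - μ ^ (k + 1) • v =
          f ((f ^ k) v - μ ^ k • v) + μ ^ k • (f v - μ • v) := by
        rw [pow_succ', Module.End.mul_apply, map_sub, map_smul, pow_succ, mul_smul, smul_sub]
        abel
      rw [hsplit, hW ih, zero_add]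
      exact W.smul_mem _ h
  obtain ⟨n, hn⟩ := hf
  by_contra hμ
  have hmem : -(μ ^ n • v) ∈ W := by simpa [hn] using hpow n
  exact hv ((W.smul_mem_iff (pow_ne_zero n hμ)).mp (W.neg_mem_iff.mp hmem))

theorem LieDerivation.apply_mem_center {R L : Type*} [CommRing R] [LieRing L] [LieAlgebra R L]
    (D : LieDerivation R L L) {z : L} (hz : z ∈ LieAlgebra.center R L) :
    D z ∈ LieAlgebra.center R L := by
  rw [LieModule.mem_maxTrivSubmodule] at hz ⊢
  intro v
  simpa [hz, eq_comm] using D.apply_lie_eq_add v z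

theorem Module.Basis.sum_repr_fin_three {R M : Type*} [Semiring R] [AddCommMonoid M]
    [Module R M] (b : Module.Basis (Fin 3) R M) (w : M) :
    b.repr w 0 • b 0 + b.repr w 1 • b 1 + b.repr w 2 • b 2 = w := by
  rw [← Fin.sum_univ_three (fun i => b.repr w i • b i), b.sum_repr]

namespace PMapping

theorem pow_mem_center {p : ℕ} {R L : Type*} [CommRing R] [LieRing L] [LieAlgebra R L]
    (P : PMapping p R L) (hp : 2 ≤ p) (h : ∀ u v w : L, ⁅u, ⁅v, w⁆⁆ = 0) (v : L) :
    P.pow v ∈ LieAlgebra.center R L := by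
  rw [LieModule.mem_maxTrivSubmodule]
  intro w
  obtain ⟨k, rfl⟩ := Nat.exists_eq_add_of_le' hp
  rw [← lie_skew, neg_eq_zero, ← LieAlgebra.ad_apply R, P.ad_pow, pow_add, Module.End.mul_apply]
  simp [sq, h]

end PMapping

namespace Heisenberg

section

variable {R L : Type*} [CommRing R] [LieRing L] [LieAlgebra R L] (b : Module.Basis (Fin 3) R L)

theorem lie_eq_smul (hxy : ⁅b 0, b 1⁆ = b 2) (hxz : ⁅b 0, b 2⁆ = 0) (hyz : ⁅b 1, b 2⁆ = 0)
    (u v : L) : ⁅u, v⁆ = (b.repr u 0 * b.repr v 1 - b.repr u 1 * b.repr v 0) • b 2 := by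
  have hyx : ⁅b 1, b 0⁆ = -b 2 := by rw [← lie_skew, hxy]
  have hzx : ⁅b 2, b 0⁆ = 0 := by rw [← lie_skew, hxz, neg_zero]
  have hzy : ⁅b 2, b 1⁆ = 0 := by rw [← lie_skew, hyz, neg_zero]
  conv_lhs => rw [← b.sum_repr u, ← b.sum_repr v]
  simp only [Fin.sum_univ_three, lie_add, add_lie, smul_lie, lie_smul, lie_self, hxy, hxz, hyz,
    hyx, hzx, hzy]
  module

theorem lie_lie_eq_zero (hxy : ⁅b 0, b 1⁆ = b 2) (hxz : ⁅b 0, b 2⁆ = 0)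
    (hyz : ⁅b 1, b 2⁆ = 0) (u v w : L) : ⁅u, ⁅v, w⁆⁆ = 0 := by
  rw [lie_eq_smul b hxy hxz hyz v, lie_smul, lie_eq_smul b hxy hxz hyz]
  simp

theorem basis_two_mem_center (hxy : ⁅b 0, b 1⁆ = b 2) (hxz : ⁅b 0, b 2⁆ = 0)
    (hyz : ⁅b 1, b 2⁆ = 0) : b 2 ∈ LieAlgebra.center R L := by
  rw [LieModule.mem_maxTrivSubmodule]
  intro u
  rw [lie_eq_smul b hxy hxz hyz]
  simp

theorem smul_basis_two_eq_zero {c : R} (h : c • b 2 = 0) : c = 0 :=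
  b.linearIndependent.smul_left_injective 2 (h.trans (zero_smul R _).symm)

theorem mem_span_of_mem_center (hxy : ⁅b 0, b 1⁆ = b 2) (hxz : ⁅b 0, b 2⁆ = 0)
    (hyz : ⁅b 1, b 2⁆ = 0) {w : L} (hw : w ∈ LieAlgebra.center R L) : w ∈ R ∙ b 2 := by
  rw [LieModule.mem_maxTrivSubmodule] at hw
  have h0 : b.repr w 0 = 0 := by
    simpa using smul_basis_two_eq_zero b ((lie_eq_smul b hxy hxz hyz _ _).symm.trans (hw (b 1)))
  have h1 : b.repr w 1 = 0 := by
    simpa using smul_basis_two_eq_zero b ((lie_eq_smul b hxy hxz hyz _ _).symm.trans (hw (b 0)))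
  rw [Submodule.mem_span_singleton]
  refine ⟨b.repr w 2, ?_⟩
  conv_rhs => rw [← b.sum_repr_fin_three w, h0, h1]
  simp

theorem sub_smul_mem_span_of_lie_eq_zero (hxy : ⁅b 0, b 1⁆ = b 2) (hxz : ⁅b 0, b 2⁆ = 0)
    (hyz : ⁅b 1, b 2⁆ = 0) {i : Fin 3} (hi : i ≠ 2) {w : L} (hw : ⁅b i, w⁆ = 0) :
    w - b.repr w i • b i ∈ R ∙ b 2 := by
  have hcoord := smul_basis_two_eq_zero b ((lie_eq_smul b hxy hxz hyz _ _).symm.trans hw)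
  rw [Submodule.mem_span_singleton]
  refine ⟨b.repr w 2, ?_⟩
  conv_rhs => rw [← b.sum_repr_fin_three w]
  fin_cases i <;> simp_all

theorem exists_lie_eq_of_apply_mem_span (hxy : ⁅b 0, b 1⁆ = b 2) (hxz : ⁅b 0, b 2⁆ = 0)
    (hyz : ⁅b 1, b 2⁆ = 0) (f : Module.End R L) (hx : f (b 0) ∈ R ∙ b 2)
    (hy : f (b 1) ∈ R ∙ b 2) (hz : f (b 2) = 0) : ∃ a : L, ∀ v : L, f v = ⁅a, v⁆ := by
  obtain ⟨e, he⟩ := Submodule.mem_span_singleton.mp hx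
  obtain ⟨g, hg⟩ := Submodule.mem_span_singleton.mp hy
  refine ⟨g • b 0 - e • b 1, fun v => ?_⟩
  suffices f = LieAlgebra.ad R L (g • b 0 - e • b 1) from LinearMap.congr_fun this v
  refine b.ext fun i => ?_
  rw [LieAlgebra.ad_apply, lie_eq_smul b hxy hxz hyz]
  fin_cases i <;> simp [← he, ← hg, hz]

end

theorem apply_mem_span_of_lie_apply_eq_zero {K L : Type*} [Field K] [LieRing L]
    [LieAlgebra K L] (b : Module.Basis (Fin 3) K L) (hxy : ⁅b 0, b 1⁆ = b 2)
    (hxz : ⁅b 0, b 2⁆ = 0) (hyz : ⁅b 1, b 2⁆ = 0) {f : Module.End K L} (hf : IsNilpotent f)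
    (hz : f (b 2) = 0) {i : Fin 3} (hi : i ≠ 2) (h : ⁅b i, f (b i)⁆ = 0) :
    f (b i) ∈ K ∙ b 2 := by
  have hW : (K ∙ b 2) ≤ LinearMap.ker f := (Submodule.span_singleton_le_iff_mem _ _).mpr hz
  have hbi : b i ∉ K ∙ b 2 := by
    simpa using b.linearIndependent.notMem_span_image (s := {2}) (Set.notMem_singleton_iff.mpr hi)
  have hsub := sub_smul_mem_span_of_lie_eq_zero b hxy hxz hyz hi h
  rwa [Module.End.eq_zero_of_isNilpotent_of_apply_sub_smul_mem hf hW hbi hsub, zero_smul,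
    sub_zero] at hsub

end Heisenberg

theorem nilpotent_restricted_derivation_of_heisenberg_isInner_general
    (F L : Type*) [Field F]
    [LieRing L] [LieAlgebra F L] (b : Module.Basis (Fin 3) F L)
    (hxy : ⁅b 0, b 1⁆ = b 2) (hxz : ⁅b 0, b 2⁆ = 0) (hyz : ⁅b 1, b 2⁆ = 0)
    (P : PMapping 2 F L) (D : LieDerivation F L L) (hD : P.IsRestrictedDer D)
    (hnil : ∃ n : ℕ, 0 < n ∧ D.toLinearMap ^ n = 0) :
    PMapping.IsInnerDer D := by
  obtain ⟨n, -, hDn⟩ := hnil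
  have hDnil : IsNilpotent D.toLinearMap := ⟨n, hDn⟩
  have hcenter {w : L} := Heisenberg.mem_span_of_mem_center b hxy hxz hyz (w := w)
  obtain ⟨μ, hμ⟩ := Submodule.mem_span_singleton.mp
    (hcenter (D.apply_mem_center (Heisenberg.basis_two_mem_center b hxy hxz hyz)))
  have hDz : D (b 2) = 0 := by
    have hμ0 : μ = 0 := Module.End.eq_zero_of_isNilpotent_of_apply_sub_smul_mem hDnil bot_le
      (by simpa using b.ne_zero 2) (by simp [← hμ])
    rw [← hμ, hμ0, zero_smul]
  have hcomm (v : L) : ⁅v, D v⁆ = 0 := by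
    obtain ⟨c, hc⟩ := Submodule.mem_span_singleton.mp
      (hcenter (P.pow_mem_center le_rfl (Heisenberg.lie_lie_eq_zero b hxy hxz hyz) v))
    simpa [← hc, hDz] using (hD v).symm
  have hDb {i : Fin 3} (hi : i ≠ 2) : D (b i) ∈ F ∙ b 2 :=
    Heisenberg.apply_mem_span_of_lie_apply_eq_zero b hxy hxz hyz hDnil hDz hi (hcomm (b i))
  exact Heisenberg.exists_lie_eq_of_apply_mem_span b hxy hxz hyz D.toLinearMap
    (hDb (i := 0) (by decide)) (hDb (i := 1) (by decide)) hDz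

/-- **Proposition.** Every nilpotent restricted derivation of a three-dimensional restricted
Heisenberg algebra over a field of characteristic two is inner. -/
theorem nilpotent_restricted_derivation_of_heisenberg_isInner
    (F L : Type*) [Field F] [CharP F 2]
    [LieRing L] [LieAlgebra F L] (b : Module.Basis (Fin 3) F L)
    (hxy : ⁅b 0, b 1⁆ = b 2) (hxz : ⁅b 0, b 2⁆ = 0) (hyz : ⁅b 1, b 2⁆ = 0)
    (P : PMapping 2 F L) (D : LieDerivation F L L) (hD : P.IsRestrictedDer D)
    (hnil : ∃ n : ℕ, 0 < n ∧ D.toLinearMap ^ n = 0) :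
    PMapping.IsInnerDer D :=
  nilpotent_restricted_derivation_of_heisenberg_isInner_general F L b hxy hxz hyz P D hD hnil
end

section
/- Let F be a field of characteristic 2 and let L = h_1(F) be the three-dimensional Heisenberg algebra over F, equipped with any p-mapping making L a restricted Lie algebra. Let D be a linear transformation of L vanishing on the center Z(L) and inducing the identity transformation on L/Z(L) (i.e., D(u) − u ∈ Z(L) for all u ∈ L). Then D is an outer restricted derivation of h_1(F). -/
open UniversalEnvelopingAlgebra

/-!
In `h₁(F)` every bracket is a multiple of the central element `z`, so `⁅⁅u, v⁆, w⁆ = 0`.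
A map `D` with `D - id` central then satisfies `⁅u, D v⁆ = ⁅u, v⁆`, and as `D` kills the
derived algebra, the Leibniz rule reduces to `⁅a, c⁆ + ⁅a, c⁆ = 0`, which is characteristic `2`.
Every `p`-th power `x^{[p]}` is central because `(ad x)^2 = 0`, so both sides of the restrictedness
condition vanish. Finally, if `D = ad a`, then `u = ⁅a, u⁆ - (D u - u)` would be central for all
`u`, but `h₁(F)` is not abelian.
-/

open LieAlgebra

section CentralDerivedAlgebra

variable {F L : Type*} [CommRing F] [LieRing L] [LieAlgebra F L]

theorem lie_map_eq_lie_of_sub_id_central {D : L →ₗ[F] L}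
    (hid : ∀ u v : L, ⁅D u - u, v⁆ = 0) (u v : L) : ⁅u, D v⁆ = ⁅u, v⁆ := by
  rw [← sub_eq_zero, ← lie_sub, ← lie_skew, hid, neg_zero]

def LieDerivation.ofIdModCenter [CharP F 2] {D : L →ₗ[F] L}
    (hL : ∀ u v w : L, ⁅⁅u, v⁆, w⁆ = 0)
    (hcenter : ∀ u : L, (∀ v : L, ⁅u, v⁆ = 0) → D u = 0)
    (hid : ∀ u v : L, ⁅D u - u, v⁆ = 0) : LieDerivation F L L where
  toLinearMap := D
  leibniz' a c := by
    rw [hcenter _ (hL a c), lie_map_eq_lie_of_sub_id_central hid,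
      lie_map_eq_lie_of_sub_id_central hid, ← lie_skew c a, sub_neg_eq_add, ← two_smul F,
      CharTwo.two_eq_zero, zero_smul]

theorem PMapping.pow_lie_eq_zero {p : ℕ} (P : PMapping p F L) (hp : 2 ≤ p)
    (hL : ∀ u v w : L, ⁅⁅u, v⁆, w⁆ = 0) (x v : L) : ⁅P.pow x, v⁆ = 0 := by
  obtain ⟨n, rfl⟩ := Nat.exists_eq_add_of_le' hp
  have had_sq : (ad F L x ^ 2) v = 0 := by
    rw [sq, Module.End.mul_apply, ad_apply, ad_apply, ← lie_skew, hL, neg_zero]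
  rw [← ad_apply F, P.ad_pow, pow_add, Module.End.mul_apply, had_sq, map_zero]

theorem PMapping.isRestrictedDer_of_map_center_eq_zero {p : ℕ} (P : PMapping p F L)
    (hp : 2 ≤ p) (hL : ∀ u v w : L, ⁅⁅u, v⁆, w⁆ = 0) (D : LieDerivation F L L)
    (hcenter : ∀ u : L, (∀ v : L, ⁅u, v⁆ = 0) → D u = 0) (hself : ∀ x : L, ⁅x, D x⁆ = 0) :
    P.IsRestrictedDer D := by
  intro x
  obtain ⟨n, hn⟩ := Nat.exists_eq_add_of_le' (Nat.le_sub_one_of_lt hp)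
  rw [hcenter _ (P.pow_lie_eq_zero hp hL x), hn, pow_succ, Module.End.mul_apply, ad_apply,
    hself, map_zero]

theorem LieDerivation.not_isInnerDer_of_sub_id_central (hL : ∀ u v w : L, ⁅⁅u, v⁆, w⁆ = 0)
    (D : LieDerivation F L L) (hid : ∀ u v : L, ⁅D u - u, v⁆ = 0)
    (hnonabelian : ∃ u v : L, ⁅u, v⁆ ≠ 0) : ¬ PMapping.IsInnerDer D := by
  rintro ⟨a, ha⟩
  obtain ⟨u, v, huv⟩ := hnonabelian
  have hu : u = ⁅a, u⁆ - (D u - u) := by rw [← ha]; abel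
  apply huv
  rw [hu, sub_lie, hL, hid, sub_zero]

end CentralDerivedAlgebra

section Heisenberg

variable {F L : Type*} [CommRing F] [LieRing L] [LieAlgebra F L] (b : Module.Basis (Fin 3) F L)
  (hxy : ⁅b 0, b 1⁆ = b 2) (hxz : ⁅b 0, b 2⁆ = 0) (hyz : ⁅b 1, b 2⁆ = 0)
include hxy hxz hyz

theorem heisenberg_lie_eq_smul (u v : L) :
    ⁅u, v⁆ = (b.repr u 0 * b.repr v 1 - b.repr u 1 * b.repr v 0) • b 2 := by
  have hyx : ⁅b 1, b 0⁆ = -b 2 := by rw [← lie_skew, hxy]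
  have hzx : ⁅b 2, b 0⁆ = 0 := by rw [← lie_skew, hxz, neg_zero]
  have hzy : ⁅b 2, b 1⁆ = 0 := by rw [← lie_skew, hyz, neg_zero]
  conv_lhs => rw [← b.sum_repr u, ← b.sum_repr v]
  simp only [Fin.sum_univ_three, add_lie, lie_add, smul_lie, lie_smul, lie_self, hxy, hxz, hyz,
    hyx, hzx, hzy, smul_zero, smul_neg, add_zero, zero_add]
  module

theorem heisenberg_lie_lie_eq_zero (u v w : L) : ⁅⁅u, v⁆, w⁆ = 0 := by
  rw [heisenberg_lie_eq_smul b hxy hxz hyz u v, smul_lie,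
    heisenberg_lie_eq_smul b hxy hxz hyz (b 2) w]
  simp

end Heisenberg

/-- **Remark.** Let `L = h₁(F)` be the three-dimensional Heisenberg algebra over a field `F`
of characteristic `2`, equipped with any `p`-mapping. Any linear transformation `D` of `L`
vanishing on the center and inducing the identity on `L/Z(L)` is an outer restricted
derivation of `L`. -/
theorem heisenberg_outer_restricted_derivation
    (F L : Type*) [Field F] [CharP F 2]
    [LieRing L] [LieAlgebra F L] (b : Module.Basis (Fin 3) F L)
    (hxy : ⁅b 0, b 1⁆ = b 2) (hxz : ⁅b 0, b 2⁆ = 0) (hyz : ⁅b 1, b 2⁆ = 0)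
    (P : PMapping 2 F L) (D : L →ₗ[F] L)
    (hcenter : ∀ u : L, (∀ v : L, ⁅u, v⁆ = 0) → D u = 0)
    (hid : ∀ u v : L, ⁅D u - u, v⁆ = 0) :
    ∃ D' : LieDerivation F L L, (⇑D' = ⇑D) ∧ P.IsRestrictedDer D' ∧
      ¬ PMapping.IsInnerDer D' := by
  have hL := heisenberg_lie_lie_eq_zero b hxy hxz hyz
  refine ⟨LieDerivation.ofIdModCenter hL hcenter hid, rfl, ?_, ?_⟩
  · refine P.isRestrictedDer_of_map_center_eq_zero le_rfl hL _ hcenter fun x => ?_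
    exact (lie_map_eq_lie_of_sub_id_central hid x x).trans (lie_self x)
  · exact LieDerivation.not_isInnerDer_of_sub_id_central hL _ hid
      ⟨b 0, b 1, hxy ▸ b.ne_zero 2⟩
end

section
/- Let F be a field of characteristic p > 0 and let L be the direct product of a two-dimensional non-abelian restricted Lie algebra over F and a one-dimensional torus over F. Then every restricted derivation of L is inner; in particular, L is a non-toral solvable restricted Lie algebra with non-zero center having no outer restricted derivations. -/
/-!
In the basis `e, f, t` every bracket is `⁅x, y⁆ = (x_e y_f - x_f y_e) f`, so the centre is `F t`,
`ad e` is idempotent and `(ad f)² = 0`. Hence `e^[p] - e` and `f^[p]` are central; as `f^[p]` also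
lies in `span {e, f}`, it vanishes, so `f` is not semisimple (it would lie in the `p`-subalgebra
`F t`). If `t^[p]` were `0`, semisimplicity of `t` would put `t` in the `p`-subalgebra
`span {e, f}`; so `t^[p] = a t` with `a ≠ 0`, and a restricted derivation `D` kills `t` because
`(ad t)^(p-1) = 0`. Applying `D` to `e^[p] = e + γ t` gives `D e = ⁅e, D e⁆ = c₀ f`, the Leibniz
rule on `⁅e, f⁆ = f` then gives `D f = c₁ f`, and `D = ad (c₁ e - c₀ f)`.
-/

open UniversalEnvelopingAlgebra

open LieAlgebra Submodule

theorem LieSubalgebra.mem_lieSpan_singleton {R L : Type*} [CommRing R] [LieRing L]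
    [LieAlgebra R L] {v x : L} : x ∈ LieSubalgebra.lieSpan R L {v} ↔ x ∈ span R {v} := by
  rw [← LieSubalgebra.mem_toSubmodule,
    LieSubalgebra.coe_lieSpan_eq_span_of_forall_lie_eq_zero (R := R) (by simp)]

theorem LieAlgebra.isSolvable_of_forall_lie_mem_span_singleton {R L : Type*} [CommRing R]
    [LieRing L] [LieAlgebra R L] (v : L) (h : ∀ x y : L, ⁅x, y⁆ ∈ span R {v}) :
    IsSolvable L := by
  have h1 : (derivedSeries R L 1 : Submodule R L) ≤ span R {v} := by
    rw [coe_derivedSeries_one_eq, span_le]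
    rintro _ ⟨x, y, rfl⟩
    exact h x y
  refine IsSolvable.mk (R := R) (k := 2) ?_
  rw [derivedSeries_def, derivedSeriesOfIdeal_succ, ← derivedSeries_def,
    LieSubmodule.lie_eq_bot_iff]
  intro x hx y hy
  obtain ⟨a, ha⟩ := mem_span_singleton.mp (h1 hx)
  obtain ⟨c, rfl⟩ := mem_span_singleton.mp (h1 hy)
  rw [← ha, smul_lie, lie_smul, lie_self, smul_zero, smul_zero]

theorem Module.Basis.repr_eq_zero_of_mem_span_image {ι R M : Type*} [Semiring R]
    [AddCommMonoid M] [Module R M] (b : Module.Basis ι R M) {s : Set ι} {i : ι} (hi : i ∉ s)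
    {z : M} (hz : z ∈ span R (b '' s)) : b.repr z i = 0 :=
  Finsupp.notMem_support_iff.mp fun h => hi (b.mem_span_image.mp hz h)

namespace PMapping

variable {p : ℕ} {F L : Type*} [CommRing F] [LieRing L] [LieAlgebra F L] (P : PMapping p F L)

theorem lie_pow_eq_zero_of_ad_pow_eq_zero {x : L} (hx : ad F L x ^ p = 0) (y : L) :
    ⁅P.pow x, y⁆ = 0 := by
  simpa using LinearMap.congr_fun ((P.ad_pow x).trans hx) y

theorem lie_pow_sub_self_eq_zero_of_isIdempotentElem (hp : p ≠ 0) {x : L}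
    (hx : IsIdempotentElem (ad F L x)) (y : L) : ⁅P.pow x - x, y⁆ = 0 := by
  have h := LinearMap.congr_fun ((P.ad_pow x).trans (hx.pow_eq hp)) y
  rw [ad_apply, ad_apply] at h
  rw [sub_lie, h, sub_self]

variable {P}

theorem IsSemisimpleElt.mem_of_pow_eq_zero {x : L} (hx : P.IsSemisimpleElt x)
    (hx0 : P.pow x = 0) {K : LieSubalgebra F L} (hK : ∀ y ∈ K, P.pow y ∈ K) : x ∈ K :=
  hx K (by simp [hx0]) hK

theorem IsRestrictedDer.apply_pow_eq_lie_of_isIdempotentElem {D : LieDerivation F L L}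
    (hD : P.IsRestrictedDer D) (hp : 1 < p) {x : L} (hx : IsIdempotentElem (ad F L x)) :
    D (P.pow x) = ⁅x, D x⁆ := by
  rw [hD x, hx.pow_eq (by omega), ad_apply]

theorem IsRestrictedDer.apply_eq_zero_of_ad_eq_zero {D : LieDerivation F L L}
    (hD : P.IsRestrictedDer D) (hp : 1 < p) {z : L} (hz : ad F L z = 0) {a : F} (ha : IsUnit a)
    (hpow : P.pow z = a • z) : D z = 0 := by
  have h := hD z
  rw [hz, zero_pow (by omega), LinearMap.zero_apply, hpow, map_smul] at h
  exact ha.smul_eq_zero.mp h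

end PMapping

/-- `b 0, b 1, b 2` are a basis `e, f, t` of `𝔞𝔣𝔣(1) × F`; the lemma names below use these letters. -/
structure IsAffProdLineBasis {F L : Type*} [CommRing F] [LieRing L] [LieAlgebra F L]
    (b : Module.Basis (Fin 3) F L) : Prop where
  lie_e_f : ⁅b 0, b 1⁆ = b 1
  lie_e_t : ⁅b 0, b 2⁆ = 0
  lie_f_t : ⁅b 1, b 2⁆ = 0

namespace IsAffProdLineBasis

variable {p : ℕ} {F L : Type*} [CommRing F] [LieRing L] [LieAlgebra F L]
  {b : Module.Basis (Fin 3) F L}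

theorem lie_eq (hb : IsAffProdLineBasis b) (x y : L) :
    ⁅x, y⁆ = (b.repr x 0 * b.repr y 1 - b.repr x 1 * b.repr y 0) • b 1 := by
  have hfe : ⁅b 1, b 0⁆ = -b 1 := by rw [← lie_skew, hb.lie_e_f]
  have hte : ⁅b 2, b 0⁆ = 0 := by rw [← lie_skew, hb.lie_e_t, neg_zero]
  have htf : ⁅b 2, b 1⁆ = 0 := by rw [← lie_skew, hb.lie_f_t, neg_zero]
  conv_lhs => rw [← b.sum_repr x, ← b.sum_repr y]
  simp only [Fin.sum_univ_three, add_lie, lie_add, smul_lie, lie_smul, hb.lie_e_f,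
    hb.lie_e_t, hb.lie_f_t, hfe, hte, htf, lie_self, smul_zero, smul_neg, add_zero,
    zero_add]
  module

theorem lie_mem_span_f (hb : IsAffProdLineBasis b) (x y : L) : ⁅x, y⁆ ∈ span F {b 1} :=
  hb.lie_eq x y ▸ smul_mem _ _ (mem_span_singleton_self _)

theorem lie_t_eq_zero (hb : IsAffProdLineBasis b) (x : L) : ⁅b 2, x⁆ = 0 := by
  simp [hb.lie_eq]

theorem ad_t_eq_zero (hb : IsAffProdLineBasis b) : ad F L (b 2) = 0 :=
  LinearMap.ext hb.lie_t_eq_zero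

theorem eq_repr_smul_t_of_forall_lie_eq_zero (hb : IsAffProdLineBasis b) {z : L}
    (hz : ∀ x : L, ⁅z, x⁆ = 0) : z = b.repr z 2 • b 2 := by
  have h0 : b.repr z 0 = 0 := by simpa [hb.lie_eq] using congr_arg (b.repr · 1) (hz (b 1))
  have h1 : b.repr z 1 = 0 := by simpa [hb.lie_eq] using congr_arg (b.repr · 1) (hz (b 0))
  nth_rw 1 [← b.sum_repr z]
  rw [Fin.sum_univ_three, h0, h1, zero_smul, zero_smul, zero_add, zero_add]

theorem isIdempotentElem_ad_e (hb : IsAffProdLineBasis b) : IsIdempotentElem (ad F L (b 0)) :=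
  b.ext fun i => by fin_cases i <;> simp [hb.lie_eq]

theorem ad_f_pow_eq_zero (hb : IsAffProdLineBasis b) {n : ℕ} (hn : 2 ≤ n) :
    ad F L (b 1) ^ n = 0 := by
  have h2 : ad F L (b 1) ^ 2 = 0 :=
    b.ext fun i => by fin_cases i <;> simp [pow_two, hb.lie_eq]
  rw [← Nat.sub_add_cancel hn, pow_add, h2, mul_zero]

def affSubalgebra (hb : IsAffProdLineBasis b) : LieSubalgebra F L :=
  { span F {b 0, b 1} with
    lie_mem' := fun _ _ => span_mono (by simp) (hb.lie_mem_span_f _ _) }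

theorem isInnerDer_of_apply_t_eq_zero (hb : IsAffProdLineBasis b) {D : LieDerivation F L L}
    (h2 : D (b 2) = 0) (h0 : D (b 0) ∈ span F {b 1}) : PMapping.IsInnerDer D := by
  obtain ⟨c₀, hc₀⟩ := mem_span_singleton.mp h0
  set c₁ := b.repr (D (b 1)) 1
  have h1 : D (b 1) = c₁ • b 1 := by
    have h := D.apply_lie_eq_add (b 0) (b 1)
    rw [hb.lie_e_f, ← hc₀, smul_lie, lie_self, smul_zero, add_zero, hb.lie_eq] at h
    simpa using h
  refine ⟨c₁ • b 0 - c₀ • b 1, fun x => LinearMap.congr_fun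
    (b.ext (f₁ := (D : L →ₗ[F] L)) (f₂ := ad F L _) fun i => ?_) x⟩
  fin_cases i <;> simp [hb.lie_eq, h2, h1, ← hc₀]

theorem exists_pow_e_eq_e_add_smul_t (hb : IsAffProdLineBasis b) (P : PMapping p F L)
    (hp : p ≠ 0) : ∃ γ : F, P.pow (b 0) = b 0 + γ • b 2 :=
  ⟨_, eq_add_of_sub_eq' (hb.eq_repr_smul_t_of_forall_lie_eq_zero
    (P.lie_pow_sub_self_eq_zero_of_isIdempotentElem hp hb.isIdempotentElem_ad_e))⟩

theorem pow_f_eq_zero [Nontrivial F] (hb : IsAffProdLineBasis b) (P : PMapping p F L)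
    (hp : 2 ≤ p) (hS : P.pow (b 1) ∈ span F {b 0, b 1}) : P.pow (b 1) = 0 := by
  rw [hb.eq_repr_smul_t_of_forall_lie_eq_zero
    (P.lie_pow_eq_zero_of_ad_pow_eq_zero (hb.ad_f_pow_eq_zero hp)),
    b.repr_eq_zero_of_mem_span_image (s := {0, 1}) (i := 2) (by decide)
      (by simpa [Set.image_insert_eq] using hS), zero_smul]

theorem pow_t_ne_zero [Nontrivial F] (hb : IsAffProdLineBasis b) (P : PMapping p F L)
    (hS : ∀ x ∈ span F {b 0, b 1}, P.pow x ∈ span F {b 0, b 1})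
    (ht : P.IsSemisimpleElt (b 2)) : P.pow (b 2) ≠ 0 := fun h => by
  have h2 : b 2 ∈ span F {b 0, b 1} := ht.mem_of_pow_eq_zero h (K := hb.affSubalgebra) hS
  have h20 := b.repr_eq_zero_of_mem_span_image (s := {0, 1}) (i := 2) (by decide)
    (by simpa [Set.image_insert_eq] using h2)
  rw [b.repr_self, Finsupp.single_eq_same] at h20
  exact one_ne_zero h20

theorem isInnerDer_of_isRestrictedDer (hb : IsAffProdLineBasis b) {P : PMapping p F L}
    (hp : 1 < p) {a : F} (ha : IsUnit a) (ht : P.pow (b 2) = a • b 2)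
    {D : LieDerivation F L L} (hD : P.IsRestrictedDer D) : PMapping.IsInnerDer D := by
  have hD2 : D (b 2) = 0 := hD.apply_eq_zero_of_ad_eq_zero hp hb.ad_t_eq_zero ha ht
  obtain ⟨γ, hγ⟩ := hb.exists_pow_e_eq_e_add_smul_t P (by omega)
  have hD0 : D (b 0) = ⁅b 0, D (b 0)⁆ := by
    simpa [hγ, hD2] using hD.apply_pow_eq_lie_of_isIdempotentElem hp hb.isIdempotentElem_ad_e
  exact hb.isInnerDer_of_apply_t_eq_zero hD2 (hD0 ▸ hb.lie_mem_span_f _ _)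

end IsAffProdLineBasis

/-- **Remark.** Let `L` be the direct product of a two-dimensional non-abelian restricted Lie
algebra and a one-dimensional torus over a field of characteristic `p > 0` (realized by a
basis `e, f, t` with `⁅e,f⁆ = f`, `t` central, the two factors closed under the `p`-mapping,
and every element of the second factor semisimple). Then every restricted derivation of `L`
is inner; in particular `L` is a non-toral solvable restricted Lie algebra with non-zero
center having no outer restricted derivations. -/
theorem direct_product_no_outer_restricted_derivation
    (p : ℕ) (F L : Type*) [Field F] [CharP F p] (hp : 0 < p)
    [LieRing L] [LieAlgebra F L] (b : Module.Basis (Fin 3) F L)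
    (hef : ⁅b 0, b 1⁆ = b 1) (het : ⁅b 0, b 2⁆ = 0) (hft : ⁅b 1, b 2⁆ = 0)
    (P : PMapping p F L)
    (hS : ∀ x ∈ Submodule.span F {b 0, b 1}, P.pow x ∈ Submodule.span F {b 0, b 1})
    (hT : ∀ x ∈ Submodule.span F ({b 2} : Set L),
      P.pow x ∈ Submodule.span F ({b 2} : Set L) ∧ P.IsSemisimpleElt x) :
    (∀ D : LieDerivation F L L, P.IsRestrictedDer D → PMapping.IsInnerDer D) ∧
      ¬ P.IsTorus ∧ LieAlgebra.IsSolvable L ∧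
      (∃ z : L, z ≠ 0 ∧ ∀ x : L, ⁅z, x⁆ = 0) := by
  have hb : IsAffProdLineBasis b := ⟨hef, het, hft⟩
  have hp1 : 1 < p := ((CharP.char_is_prime_or_zero F p).resolve_right hp.ne').one_lt
  obtain ⟨ht, hss⟩ := hT (b 2) (mem_span_singleton_self _)
  obtain ⟨a, hta⟩ := mem_span_singleton.mp ht
  have ha : a ≠ 0 := by
    rintro rfl
    exact hb.pow_t_ne_zero P hS hss (by rw [← hta, zero_smul])
  refine ⟨fun D hD => hb.isInnerDer_of_isRestrictedDer hp1 ha.isUnit hta.symm hD, fun hTor => ?_,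
    isSolvable_of_forall_lie_mem_span_singleton (b 1) hb.lie_mem_span_f,
    b 2, b.ne_zero 2, hb.lie_t_eq_zero⟩
  have hf : b 1 ∈ LieSubalgebra.lieSpan F L {b 2} :=
    (hTor (b 1)).mem_of_pow_eq_zero (hb.pow_f_eq_zero P hp1 (hS _ (subset_span (by simp))))
      fun y hy => LieSubalgebra.mem_lieSpan_singleton.mpr
        (hT y (LieSubalgebra.mem_lieSpan_singleton.mp hy)).1
  rw [LieSubalgebra.mem_lieSpan_singleton, ← Set.image_singleton, b.self_mem_span_image] at hf
  exact absurd hf (by decide)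
end
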